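/- Let R₀ = √(7 − √33)/2 and let x ∈ ℝ² with ‖x‖² ≤ 1/50. With ρ_{R₀} and φ_{R₀} as given, define S(x)(y,z) := D²ρ_{R₀}(x)(y,z) − ⟪∇φ_{R₀}(x),y⟫·⟪∇ρ_{R₀}(x),z⟫ − ⟪∇φ_{R₀}(x),z⟫·⟪∇ρ_{R₀}(x),y⟫ + ⟪∇φ_{R₀}(x),∇ρ_{R₀}(x)⟫·⟪y,z⟫. Then for every y ∈ ℝ², S(x)(y,y) ≤ ( 8 / (R₀²·(1−‖x‖²)²) )·‖y‖². -/

import Mathlib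

open scoped RealInnerProductSpace

/-- The weight from the Poincaré disk model rewritten over the stereographic chart
of the sphere of radius `R`. -/
noncomputable def rhoR (R : ℝ) (x : EuclideanSpace ℝ (Fin 2)) : ℝ :=
  (R ^ 2 + ‖x‖ ^ 2) ^ 2 / (R ^ 4 * (1 - ‖x‖ ^ 2) ^ 2)

/-- The conformal factor of the spherical metric of radius `R` in stereographic
coordinates. -/
noncomputable def phiR (R : ℝ) (x : EuclideanSpace ℝ (Fin 2)) : ℝ :=
  Real.log (2 * R ^ 2 / (R ^ 2 + ‖x‖ ^ 2))

/-- The Hessian of `rhoR` with respect to the conformal (spherical) metric,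
computed via `Hess_g̃ F = Hess_g F − 2 dφ ⊗ dF + (∇φ·∇F) g`. -/
noncomputable def sphericalHess (R : ℝ) (x y z : EuclideanSpace ℝ (Fin 2)) : ℝ :=
  fderiv ℝ (fderiv ℝ (rhoR R)) x y z -
    ⟪gradient (phiR R) x, y⟫ * ⟪gradient (rhoR R) x, z⟫ -
    ⟪gradient (phiR R) x, z⟫ * ⟪gradient (rhoR R) x, y⟫ +
    ⟪gradient (phiR R) x, gradient (rhoR R) x⟫ * ⟪y, z⟫

/-!
Both `rhoR R` and `phiR R` are radial, `F x = f ‖x‖²`, so their gradients are `2 f'(‖x‖²) x` and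
their Euclidean Hessians are `2 f'(‖x‖²) ⟪y, z⟫ + 4 f''(‖x‖²) ⟪x, y⟫ ⟪x, z⟫`. Substituting the
explicit profiles, the spherical Hessian in the direction `y` becomes, with `r = R²` and `t = ‖x‖²`,
`(4 (1 + r) (1 - t) (r - t) ‖y‖² + 24 (1 + r)² ⟪x, y⟫²) / (r² (1 - t)⁴)`.
After Cauchy–Schwarz, `⟪x, y⟫² ≤ t ‖y‖²`, the bound reduces to the polynomial inequality
`(1 + r) (1 - t) (r - t) + 6 (1 + r)² t ≤ 2 r (1 - t)²`, which holds for `t ≤ 1/50` when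
`r = R₀² = (7 - √33)/4 ≈ 0.314`.
-/

open Filter Topology

section Radial

variable {E : Type*} [NormedAddCommGroup E] [InnerProductSpace ℝ E]

theorem HasDerivAt.hasFDerivAt_comp_norm_sq {f : ℝ → ℝ} {f' : ℝ} {x : E}
    (hf : HasDerivAt f f' (‖x‖ ^ 2)) :
    HasFDerivAt (fun y => f (‖y‖ ^ 2)) (f' • 2 • innerSL ℝ x) x :=
  hf.comp_hasFDerivAt x (hasStrictFDerivAt_norm_sq x).hasFDerivAt

theorem HasDerivAt.gradient_comp_norm_sq [CompleteSpace E] {f : ℝ → ℝ} {f' : ℝ} {x : E}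
    (hf : HasDerivAt f f' (‖x‖ ^ 2)) :
    gradient (fun y => f (‖y‖ ^ 2)) x = (2 * f') • x := by
  refine HasGradientAt.gradient (hf.hasFDerivAt_comp_norm_sq.congr_fderiv ?_)
  ext y
  simp
  ring

theorem fderiv_fderiv_comp_norm_sq_apply {f f' : ℝ → ℝ} {f'' : ℝ} {x : E}
    (hf : ∀ᶠ t in 𝓝 (‖x‖ ^ 2), HasDerivAt f (f' t) t) (hf' : HasDerivAt f' f'' (‖x‖ ^ 2))
    (y z : E) :
    fderiv ℝ (fderiv ℝ fun w => f (‖w‖ ^ 2)) x y z =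
      2 * f' (‖x‖ ^ 2) * ⟪y, z⟫ + 4 * f'' * ⟪x, y⟫ * ⟪x, z⟫ := by
  have hfderiv : fderiv ℝ (fun w => f (‖w‖ ^ 2)) =ᶠ[𝓝 x]
      fun w => f' (‖w‖ ^ 2) • (2 • innerSL ℝ : E →L[ℝ] E →L[ℝ] ℝ) w := by
    filter_upwards [((continuous_norm.pow 2).tendsto x).eventually hf] with w hw
    exact hw.hasFDerivAt_comp_norm_sq.fderiv
  have hsecond : HasFDerivAt (fun w => f' (‖w‖ ^ 2) • (2 • innerSL ℝ : E →L[ℝ] E →L[ℝ] ℝ) w)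
      (f' (‖x‖ ^ 2) • 2 • innerSL ℝ + (f'' • 2 • innerSL ℝ x).smulRight (2 • innerSL ℝ x)) x :=
    hf'.hasFDerivAt_comp_norm_sq.smul (2 • innerSL ℝ : E →L[ℝ] E →L[ℝ] ℝ).hasFDerivAt
  -- `innerSL ℝ` is conjugate-linear in its first argument; read as a linear map it is no longer
  -- in the form `innerSL_apply_apply` matches.
  have hinner (u v : E) : (innerSL ℝ : E →L[ℝ] E →L[ℝ] ℝ) u v = ⟪u, v⟫ := rfl
  rw [hfderiv.fderiv_eq, hsecond.fderiv]
  simp [hinner]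
  ring

end Radial

section Profiles

variable {R t : ℝ}

theorem hasDerivAt_rhoR_profile (hR : R ≠ 0) (ht : t ≠ 1) :
    HasDerivAt (fun t => (R ^ 2 + t) ^ 2 / (R ^ 4 * (1 - t) ^ 2))
      (2 * (1 + R ^ 2) * (R ^ 2 + t) / (R ^ 4 * (1 - t) ^ 3)) t := by
  have h1t : 1 - t ≠ 0 := sub_ne_zero.2 ht.symm
  have hnum : HasDerivAt (fun t => (R ^ 2 + t) ^ 2) (2 * (R ^ 2 + t)) t := by
    simpa using ((hasDerivAt_id t).const_add (R ^ 2)).fun_pow 2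
  have hden : HasDerivAt (fun t => R ^ 4 * (1 - t) ^ 2) (-(R ^ 4 * (2 * (1 - t)))) t := by
    simpa using (((hasDerivAt_const t 1).sub (hasDerivAt_id t)).fun_pow 2).const_mul (R ^ 4)
  refine (hnum.div hden (by positivity)).congr_deriv ?_
  field_simp
  ring

theorem hasDerivAt_rhoR_profile_deriv (hR : R ≠ 0) (ht : t ≠ 1) :
    HasDerivAt (fun t => 2 * (1 + R ^ 2) * (R ^ 2 + t) / (R ^ 4 * (1 - t) ^ 3))
      (2 * (1 + R ^ 2) * (1 + 3 * R ^ 2 + 2 * t) / (R ^ 4 * (1 - t) ^ 4)) t := by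
  have h1t : 1 - t ≠ 0 := sub_ne_zero.2 ht.symm
  have hnum : HasDerivAt (fun t => 2 * (1 + R ^ 2) * (R ^ 2 + t)) (2 * (1 + R ^ 2)) t := by
    simpa using ((hasDerivAt_id t).const_add (R ^ 2)).const_mul (2 * (1 + R ^ 2))
  have hden : HasDerivAt (fun t => R ^ 4 * (1 - t) ^ 3) (-(3 * R ^ 4 * (1 - t) ^ 2)) t := by
    simpa [mul_comm, mul_left_comm] using
      (((hasDerivAt_const t 1).sub (hasDerivAt_id t)).fun_pow 3).const_mul (R ^ 4)
  refine (hnum.div hden (by simp [hR, h1t])).congr_deriv ?_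
  field_simp
  ring

theorem hasDerivAt_phiR_profile (hR : R ≠ 0) (ht : R ^ 2 + t ≠ 0) :
    HasDerivAt (fun t => Real.log (2 * R ^ 2 / (R ^ 2 + t))) (-1 / (R ^ 2 + t)) t := by
  have hquot : HasDerivAt (fun t => 2 * R ^ 2 / (R ^ 2 + t)) (-(2 * R ^ 2) / (R ^ 2 + t) ^ 2) t := by
    simpa using (hasDerivAt_const t (2 * R ^ 2)).fun_div ((hasDerivAt_id t).const_add (R ^ 2)) ht
  refine (hquot.log (by simp [hR, ht])).congr_deriv ?_
  field_simp

end Profiles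

theorem hessian_coefficient_le {r t : ℝ} (hr₁ : 31 / 100 ≤ r) (hr₂ : r ≤ 63 / 200)
    (ht₀ : 0 ≤ t) (ht₁ : t ≤ 1 / 50) :
    (1 + r) * (1 - t) * (r - t) + 6 * (1 + r) ^ 2 * t ≤ 2 * r * (1 - t) ^ 2 := by
  nlinarith [mul_nonneg ht₀ (sub_nonneg.2 hr₂), mul_nonneg ht₀ (sub_nonneg.2 ht₁),
    mul_nonneg (sub_nonneg.2 hr₁) (sub_nonneg.2 ht₁)]

section SphericalHessian

variable {R : ℝ} {x : EuclideanSpace ℝ (Fin 2)}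

theorem sphericalHess_self_eq (hR : R ≠ 0) (hx : ‖x‖ ^ 2 < 1) (y : EuclideanSpace ℝ (Fin 2)) :
    sphericalHess R x y y =
      (4 * (1 + R ^ 2) * (1 - ‖x‖ ^ 2) * (R ^ 2 - ‖x‖ ^ 2) * ‖y‖ ^ 2 +
        24 * (1 + R ^ 2) ^ 2 * ⟪x, y⟫ ^ 2) / (R ^ 4 * (1 - ‖x‖ ^ 2) ^ 4) := by
  have hR2x : R ^ 2 + ‖x‖ ^ 2 ≠ 0 := by positivity
  have h1x : 1 - ‖x‖ ^ 2 ≠ 0 := sub_ne_zero.2 hx.ne'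
  have hrho := hasDerivAt_rhoR_profile hR hx.ne
  have hhess := fderiv_fderiv_comp_norm_sq_apply
    ((eventually_ne_nhds hx.ne).mono fun _ ht => hasDerivAt_rhoR_profile hR ht)
    (hasDerivAt_rhoR_profile_deriv hR hx.ne) y y
  unfold sphericalHess rhoR phiR
  rw [hhess, hrho.gradient_comp_norm_sq,
    (hasDerivAt_phiR_profile hR hR2x).gradient_comp_norm_sq]
  simp only [real_inner_smul_left, real_inner_smul_right, real_inner_self_eq_norm_sq,
    real_inner_comm y x]
  field_simp
  ring

theorem sphericalHess_self_le (hR₁ : 31 / 100 ≤ R ^ 2) (hR₂ : R ^ 2 ≤ 63 / 200)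
    (hx : ‖x‖ ^ 2 ≤ 1 / 50) (y : EuclideanSpace ℝ (Fin 2)) :
    sphericalHess R x y y ≤ 8 / (R ^ 2 * (1 - ‖x‖ ^ 2) ^ 2) * ‖y‖ ^ 2 := by
  have hR : R ≠ 0 := by rintro rfl; norm_num at hR₁
  have h1x : 0 < 1 - ‖x‖ ^ 2 := by linarith
  have hcs : ⟪x, y⟫ ^ 2 ≤ ‖x‖ ^ 2 * ‖y‖ ^ 2 := by
    rw [← mul_pow, ← sq_abs]
    exact pow_le_pow_left₀ (abs_nonneg _) (abs_real_inner_le_norm x y) 2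
  have hnum : 4 * (1 + R ^ 2) * (1 - ‖x‖ ^ 2) * (R ^ 2 - ‖x‖ ^ 2) * ‖y‖ ^ 2 +
      24 * (1 + R ^ 2) ^ 2 * ⟪x, y⟫ ^ 2 ≤ 8 * R ^ 2 * (1 - ‖x‖ ^ 2) ^ 2 * ‖y‖ ^ 2 := by
    have hcoeff := hessian_coefficient_le hR₁ hR₂ (by positivity) hx
    linarith [mul_le_mul_of_nonneg_left hcs (by positivity : 0 ≤ 24 * (1 + R ^ 2) ^ 2),
      mul_le_mul_of_nonneg_right hcoeff (by positivity : 0 ≤ 4 * ‖y‖ ^ 2)]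
  rw [sphericalHess_self_eq hR (by linarith), div_le_iff₀ (by positivity)]
  calc _ ≤ 8 * R ^ 2 * (1 - ‖x‖ ^ 2) ^ 2 * ‖y‖ ^ 2 := hnum
    _ = _ := by field_simp

end SphericalHessian

theorem sqrt_seven_sub_sqrt_33_div_two_sq_mem_Icc :
    (Real.sqrt (7 - Real.sqrt 33) / 2) ^ 2 ∈ Set.Icc (31 / 100) (63 / 200) := by
  have hlo : (5.74 : ℝ) ≤ Real.sqrt 33 := Real.le_sqrt_of_sq_le (by norm_num)
  have hhi : Real.sqrt 33 ≤ 5.76 := Real.sqrt_le_iff.2 ⟨by norm_num, by norm_num⟩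
  rw [div_pow, Real.sq_sqrt (by linarith)]
  constructor <;> linarith

theorem spherical_hessian_bound_at_R₀
    (x : EuclideanSpace ℝ (Fin 2)) (hx : ‖x‖ ^ 2 ≤ 1 / 50) :
    ∀ y : EuclideanSpace ℝ (Fin 2),
      sphericalHess (Real.sqrt (7 - Real.sqrt 33) / 2) x y y ≤
        8 / ((Real.sqrt (7 - Real.sqrt 33) / 2) ^ 2 * (1 - ‖x‖ ^ 2) ^ 2) * ‖y‖ ^ 2 :=
  sphericalHess_self_le sqrt_seven_sub_sqrt_33_div_two_sq_mem_Icc.1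
    sqrt_seven_sub_sqrt_33_div_two_sq_mem_Icc.2 hx
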